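/- arXiv:2410.10761 — 2 statements merged into one kernel-verified Lean document; each statement's English description precedes it below -/
import Mathlib

section
/- Let k be a field and n ≥ 1 an integer. For a ∈ kˣ let E_a = diag(a²,1,…,1) ∈ GL_n(k) and let φ : kˣ → Aut(SL_n(k)) be the action φ(a)(g) = E_a g E_a⁻¹. Then the map SL_n(k) ⋊[φ] kˣ → kˣ × GL_n(k), (g,a) ↦ (a, g·E_a), is an injective group homomorphism whose image equals the subgroup {(a, h) ∈ kˣ × GL_n(k) : det h = a²}. -/
/-- The diagonal matrix `diag(a², 1, …, 1)`. -/
def diagSq {k : Type*} [Field k] {n : ℕ} (a : kˣ) : Matrix (Fin n) (Fin n) k :=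
  Matrix.diagonal (fun i => if (i : ℕ) = 0 then (a : k) ^ 2 else 1)

namespace DiagSqAux

variable {k : Type*} [Field k] {n : ℕ}

lemma diagSq_mul (a b : kˣ) : (diagSq a : Matrix (Fin n) (Fin n) k) * diagSq b = diagSq (a * b) := by
  simp only [diagSq, Matrix.diagonal_mul_diagonal]
  have : (fun i : Fin n => (if (i : ℕ) = 0 then (a : k) ^ 2 else 1) *
      (if (i : ℕ) = 0 then (b : k) ^ 2 else 1))
      = fun i : Fin n => if (i : ℕ) = 0 then ((a * b : kˣ) : k) ^ 2 else 1 := by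
    funext i; by_cases h : (i : ℕ) = 0 <;> simp [h, mul_pow]
  rw [this]

lemma diagSq_one : (diagSq 1 : Matrix (Fin n) (Fin n) k) = 1 := by
  simp only [diagSq]
  rw [← Matrix.diagonal_one]
  have : (fun i : Fin n => if (i : ℕ) = 0 then ((1 : kˣ) : k) ^ 2 else 1)
      = fun _ : Fin n => (1 : k) := by
    funext i; by_cases h : (i : ℕ) = 0 <;> simp [h]
  rw [this]

lemma diagSq_mul_inv (a : kˣ) : (diagSq a : Matrix (Fin n) (Fin n) k) * diagSq a⁻¹ = 1 := by
  rw [diagSq_mul, mul_inv_cancel, diagSq_one]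

lemma diagSq_inv_mul (a : kˣ) : (diagSq a⁻¹ : Matrix (Fin n) (Fin n) k) * diagSq a = 1 := by
  rw [diagSq_mul, inv_mul_cancel, diagSq_one]

lemma det_diagSq (hn : 1 ≤ n) (a : kˣ) :
    (diagSq a : Matrix (Fin n) (Fin n) k).det = (a : k) ^ 2 := by
  rw [diagSq, Matrix.det_diagonal]
  have : (⟨0, hn⟩ : Fin n) ∈ (Finset.univ : Finset (Fin n)) := Finset.mem_univ _
  rw [Finset.prod_eq_single (⟨0, hn⟩ : Fin n)]
  · simp
  · intro b _ hb
    simp only [ite_eq_right_iff]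
    intro h0
    exact absurd (Fin.ext h0 : b = ⟨0, hn⟩) hb
  · simp

/-- `diagSq a` as an element of `GL`. -/
def E (a : kˣ) : GL (Fin n) k :=
  ⟨diagSq a, diagSq a⁻¹, diagSq_mul_inv a, diagSq_inv_mul a⟩

end DiagSqAux

open DiagSqAux

/-- For the action of `kˣ` on `SL_n(k)` by conjugation by `E_a = diag(a², 1, …, 1)`,
the map `SL_n(k) ⋊ kˣ → kˣ × GL_n(k)`, `(g, a) ↦ (a, g·E_a)`, is an injective group
homomorphism with image `{(a, h) : det h = a²}`. -/
theorem semidirect_SL_units_into_units_prod_GL {k : Type*} [Field k] {n : ℕ} (hn : 1 ≤ n)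
    (φ : kˣ →* MulAut (Matrix.SpecialLinearGroup (Fin n) k))
    (hφ : ∀ (a : kˣ) (g : Matrix.SpecialLinearGroup (Fin n) k),
      ((φ a g : Matrix.SpecialLinearGroup (Fin n) k) : Matrix (Fin n) (Fin n) k)
        = diagSq a * (g : Matrix (Fin n) (Fin n) k) * diagSq a⁻¹) :
    ∃ Ψ : (Matrix.SpecialLinearGroup (Fin n) k ⋊[φ] kˣ) →* kˣ × GL (Fin n) k,
      (∀ (g : Matrix.SpecialLinearGroup (Fin n) k) (a : kˣ),
        (Ψ ⟨g, a⟩).1 = a ∧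
          (((Ψ ⟨g, a⟩).2 : GL (Fin n) k) : Matrix (Fin n) (Fin n) k)
            = (g : Matrix (Fin n) (Fin n) k) * diagSq a) ∧
      Function.Injective Ψ ∧
      (∀ p : kˣ × GL (Fin n) k,
        p ∈ Ψ.range ↔
          Matrix.det ((p.2 : GL (Fin n) k) : Matrix (Fin n) (Fin n) k) = (p.1 : k) ^ 2) := by
  classical
  -- `E` as a monoid hom into GL
  let Ehom : kˣ →* GL (Fin n) k :=
    { toFun := E
      map_one' := by
        apply Units.ext
        show (diagSq (1 : kˣ) : Matrix (Fin n) (Fin n) k) = 1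
        exact diagSq_one
      map_mul' := fun a b => by
        apply Units.ext
        show (diagSq (a * b) : Matrix (Fin n) (Fin n) k) = diagSq a * diagSq b
        exact (diagSq_mul a b).symm }
  let f₁ : Matrix.SpecialLinearGroup (Fin n) k →* kˣ × GL (Fin n) k :=
    (1 : Matrix.SpecialLinearGroup (Fin n) k →* kˣ).prod Matrix.SpecialLinearGroup.toGL
  let f₂ : kˣ →* kˣ × GL (Fin n) k := (MonoidHom.id kˣ).prod Ehom
  have hEmat : ∀ a : kˣ, ((Ehom a : GL (Fin n) k) : Matrix (Fin n) (Fin n) k) = diagSq a :=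
    fun a => rfl
  have hEinv : ∀ a : kˣ, (((Ehom a)⁻¹ : GL (Fin n) k) : Matrix (Fin n) (Fin n) k) = diagSq a⁻¹ :=
    fun a => rfl
  have hGL : ∀ g : Matrix.SpecialLinearGroup (Fin n) k,
      ((Matrix.SpecialLinearGroup.toGL g : GL (Fin n) k) : Matrix (Fin n) (Fin n) k)
        = (g : Matrix (Fin n) (Fin n) k) := fun g => rfl
  have compat : ∀ a : kˣ,
      f₁.comp (MulEquiv.toMonoidHom (φ a))
        = (MulEquiv.toMonoidHom (MulAut.conj (f₂ a))).comp f₁ := by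
    intro a
    apply MonoidHom.ext
    intro g
    show f₁ (φ a g) = f₂ a * f₁ g * (f₂ a)⁻¹
    apply Prod.ext
    · simp [f₁, f₂]
    · apply Units.ext
      show ((Matrix.SpecialLinearGroup.toGL (φ a g) : GL (Fin n) k) : Matrix (Fin n) (Fin n) k)
        = ((Ehom a * Matrix.SpecialLinearGroup.toGL g * (Ehom a)⁻¹ : GL (Fin n) k) :
            Matrix (Fin n) (Fin n) k)
      rw [hGL, hφ, Units.val_mul, Units.val_mul, hEmat, hEinv, hGL]
  set Ψ := SemidirectProduct.lift f₁ f₂ compat with hΨ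
  have key : ∀ (g : Matrix.SpecialLinearGroup (Fin n) k) (a : kˣ),
      Ψ ⟨g, a⟩ = ((1 : kˣ) * a, Matrix.SpecialLinearGroup.toGL g * Ehom a) := fun _ _ => rfl
  refine ⟨Ψ, ?_, ?_, ?_⟩
  · intro g a
    constructor
    · rw [key]; exact one_mul a
    · rw [key]
      show ((Matrix.SpecialLinearGroup.toGL g * Ehom a : GL (Fin n) k) :
        Matrix (Fin n) (Fin n) k) = _
      rw [Units.val_mul, hGL, hEmat]
  · rw [injective_iff_map_eq_one]
    rintro ⟨g, a⟩ h
    rw [key] at h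
    have ha : a = 1 := by simpa using congrArg Prod.fst h
    have h2 : (Matrix.SpecialLinearGroup.toGL g * Ehom a : GL (Fin n) k) = 1 :=
      congrArg Prod.snd h
    have hg : g = 1 := by
      subst ha
      apply Subtype.ext
      have := congrArg (fun u : GL (Fin n) k => (u : Matrix (Fin n) (Fin n) k)) h2
      simpa [Units.val_mul, hGL, hEmat, diagSq_one] using this
    rw [ha, hg]
    rfl
  · intro p
    constructor
    · rintro ⟨⟨g, a⟩, rfl⟩
      rw [key]
      show ((Matrix.SpecialLinearGroup.toGL g * Ehom a : GL (Fin n) k) :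
        Matrix (Fin n) (Fin n) k).det = (((1 : kˣ) * a : kˣ) : k) ^ 2
      rw [Units.val_mul, hGL, hEmat, Matrix.det_mul, g.prop, one_mul, det_diagSq hn]
      simp
    · intro hdet
      obtain ⟨a, h⟩ := p
      have hgdet : ((h : Matrix (Fin n) (Fin n) k) * diagSq a⁻¹).det = 1 := by
        rw [Matrix.det_mul, hdet, det_diagSq hn]
        simp [← mul_pow]
      refine ⟨⟨⟨(h : Matrix (Fin n) (Fin n) k) * diagSq a⁻¹, hgdet⟩, a⟩, ?_⟩
      refine (key _ a).trans ?_
      apply Prod.ext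
      · exact one_mul a
      · apply Units.ext
        show ((Matrix.SpecialLinearGroup.toGL _ * Ehom a : GL (Fin n) k) :
          Matrix (Fin n) (Fin n) k) = (h : Matrix (Fin n) (Fin n) k)
        rw [Units.val_mul, hEmat]
        show (h : Matrix (Fin n) (Fin n) k) * diagSq a⁻¹ * diagSq a = _
        rw [mul_assoc, diagSq_inv_mul, mul_one]
end

section
/- Let k be an algebraically closed field, l ≥ 1 an integer, and n = 2l. Let N = {(z⁻¹, z·I) : z ∈ kˣ, z^l = 1}, a central subgroup of kˣ × SL_n(k), and let H = {(b, h) ∈ kˣ × GL_n(k) : det h = b²}. Then the homomorphism (kˣ × SL_n(k))/N → H induced by (a,g) ↦ (a^l, a·g) is a group isomorphism. -/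
/-- The subgroup `{(b, h) ∈ kˣ × GL_n(k) : det h = b²}`. -/
def detSqSubgroup (k : Type*) [Field k] (n : ℕ) : Subgroup (kˣ × GL (Fin n) k) where
  carrier := {p | Matrix.GeneralLinearGroup.det p.2 = p.1 ^ 2}
  one_mem' := by simp
  mul_mem' := by
    rintro ⟨b1, h1⟩ ⟨b2, h2⟩ hx hy
    show Matrix.GeneralLinearGroup.det (h1 * h2) = (b1 * b2) ^ 2
    rw [map_mul, hx, hy, mul_pow]
  inv_mem' := by
    rintro ⟨b, h⟩ hx
    show Matrix.GeneralLinearGroup.det h⁻¹ = (b⁻¹) ^ 2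
    rw [map_inv, hx, inv_pow]

/-- The homomorphism sending an `l`-th root of unity `z` to the scalar matrix
`z·I ∈ SL_{2l}(k)`. -/
def scalarSLHomHalf (k : Type*) [Field k] (l : ℕ) :
    (powMonoidHom l : kˣ →* kˣ).ker →* Matrix.SpecialLinearGroup (Fin (2 * l)) k where
  toFun z := ⟨((z : kˣ) : k) • (1 : Matrix (Fin (2 * l)) (Fin (2 * l)) k), by
    have hz : (z : kˣ) ^ l = 1 := z.2
    have hz' : ((z : kˣ) : k) ^ l = 1 := by
      rw [← Units.val_pow_eq_pow_val, hz, Units.val_one]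
    rw [Matrix.det_smul, Matrix.det_one, mul_one, Fintype.card_fin, mul_comm 2 l,
      pow_mul, hz', one_pow]⟩
  map_one' := by
    apply Subtype.ext
    simp
  map_mul' z w := by
    apply Subtype.ext
    show ((((z * w : (powMonoidHom l : kˣ →* kˣ).ker) : kˣ)) : k)
        • (1 : Matrix (Fin (2 * l)) (Fin (2 * l)) k)
      = (((z : kˣ) : k) • (1 : Matrix (Fin (2 * l)) (Fin (2 * l)) k))
        * (((w : kˣ) : k) • (1 : Matrix (Fin (2 * l)) (Fin (2 * l)) k))
    rw [smul_mul_smul_comm, one_mul]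
    norm_cast

/-- The homomorphism `z ↦ (z⁻¹, z·I)` from the `l`-th roots of unity to
`kˣ × SL_{2l}(k)`. -/
def muDiagHomHalf (k : Type*) [Field k] (l : ℕ) :
    (powMonoidHom l : kˣ →* kˣ).ker →* kˣ × Matrix.SpecialLinearGroup (Fin (2 * l)) k :=
  (invMonoidHom.comp (powMonoidHom l : kˣ →* kˣ).ker.subtype).prod (scalarSLHomHalf k l)

theorem muDiagHomHalf_range_normal (k : Type*) [Field k] (l : ℕ) :
    (muDiagHomHalf k l).range.Normal := by
  constructor
  rintro _ ⟨z, rfl⟩ ⟨a, g⟩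
  refine ⟨z, ?_⟩
  have h1 : a * ((z : kˣ))⁻¹ * a⁻¹ = ((z : kˣ))⁻¹ := by
    rw [mul_comm a, mul_inv_cancel_right]
  have h2 : g * scalarSLHomHalf k l z * g⁻¹ = scalarSLHomHalf k l z := by
    rw [mul_inv_eq_iff_eq_mul]
    apply Subtype.ext
    show (g : Matrix (Fin (2 * l)) (Fin (2 * l)) k)
        * (((z : kˣ) : k) • (1 : Matrix (Fin (2 * l)) (Fin (2 * l)) k))
      = (((z : kˣ) : k) • (1 : Matrix (Fin (2 * l)) (Fin (2 * l)) k))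
        * (g : Matrix (Fin (2 * l)) (Fin (2 * l)) k)
    rw [mul_smul_comm, smul_mul_assoc, mul_one, one_mul]
  exact Prod.ext h1.symm h2.symm


noncomputable def sGLHom (k : Type*) [Field k] (n : ℕ) : kˣ →* GL (Fin n) k :=
  Units.map (algebraMap k (Matrix (Fin n) (Fin n) k)).toMonoidHom

noncomputable def phiHom (k : Type*) [Field k] (l : ℕ) :
    kˣ × Matrix.SpecialLinearGroup (Fin (2 * l)) k →* (kˣ × GL (Fin (2 * l)) k) where
  toFun p := (p.1 ^ l, sGLHom k (2 * l) p.1 * Matrix.SpecialLinearGroup.toGL p.2)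
  map_one' := by simp
  map_mul' p q := by
    have hc : ∀ (a : kˣ) (g : Matrix.SpecialLinearGroup (Fin (2 * l)) k),
        Matrix.SpecialLinearGroup.toGL g * sGLHom k (2 * l) a
          = sGLHom k (2 * l) a * Matrix.SpecialLinearGroup.toGL g := by
      intro a g
      ext i j
      exact congrFun (congrFun (Algebra.commutes (a : k) (g : Matrix (Fin (2*l)) (Fin (2*l)) k)).symm i) j
    simp only [Prod.fst_mul, Prod.snd_mul, map_mul, mul_pow, Prod.mk_mul_mk]
    rw [(show Commute (Matrix.SpecialLinearGroup.toGL p.2) (sGLHom k (2 * l) q.1) from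
      hc q.1 p.2).mul_mul_mul_comm, mul_assoc]

theorem phiHom_mem (k : Type*) [Field k] (l : ℕ)
    (p : kˣ × Matrix.SpecialLinearGroup (Fin (2 * l)) k) :
    phiHom k l p ∈ detSqSubgroup k (2 * l) := by
  show Matrix.GeneralLinearGroup.det (phiHom k l p).2 = (phiHom k l p).1 ^ 2
  ext
  show Matrix.det (((sGLHom k (2 * l) p.1 : GL (Fin (2 * l)) k) : Matrix _ _ k)
    * (p.2 : Matrix (Fin (2 * l)) (Fin (2 * l)) k)) = ((p.1 : k) ^ l) ^ 2
  have : ((sGLHom k (2 * l) p.1 : GL (Fin (2 * l)) k) : Matrix (Fin (2*l)) (Fin (2*l)) k)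
      = (p.1 : k) • 1 := Algebra.algebraMap_eq_smul_one _
  rw [Matrix.det_mul, this, Matrix.det_smul, Matrix.det_one, p.2.2, Fintype.card_fin]
  ring

noncomputable def phiHom' (k : Type*) [Field k] (l : ℕ) :
    kˣ × Matrix.SpecialLinearGroup (Fin (2 * l)) k →* detSqSubgroup k (2 * l) :=
  (phiHom k l).codRestrict _ (phiHom_mem k l)


theorem sGLHom_val (k : Type*) [Field k] (n : ℕ) (a : kˣ) :
    ((sGLHom k n a : GL (Fin n) k) : Matrix (Fin n) (Fin n) k) = (a : k) • 1 :=
  Algebra.algebraMap_eq_smul_one _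

theorem muDiag_range_eq_ker (k : Type*) [Field k] (l : ℕ) :
    (muDiagHomHalf k l).range = (phiHom' k l).ker := by
  ext p
  obtain ⟨a, g⟩ := p
  constructor
  · rintro ⟨z, hz⟩
    have ha : a = ((z : kˣ))⁻¹ := (congrArg Prod.fst hz).symm
    have hg : g = scalarSLHomHalf k l z := (congrArg Prod.snd hz).symm
    subst ha; subst hg
    have hz2 : (z : kˣ) ^ l = 1 := z.2
    show phiHom' k l _ = 1
    apply Subtype.ext
    show phiHom k l _ = 1
    apply Prod.ext
    · show ((z : kˣ)⁻¹) ^ l = 1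
      rw [inv_pow, hz2, inv_one]
    · show sGLHom k (2 * l) ((z : kˣ)⁻¹)
        * Matrix.SpecialLinearGroup.toGL (scalarSLHomHalf k l z) = 1
      apply Units.ext
      show ((sGLHom k (2 * l) ((z : kˣ)⁻¹) : GL (Fin (2 * l)) k) : Matrix _ _ k)
        * (((z : kˣ) : k) • (1 : Matrix (Fin (2 * l)) (Fin (2 * l)) k))
        = (1 : Matrix (Fin (2 * l)) (Fin (2 * l)) k)
      rw [sGLHom_val]
      have : ((((z : kˣ))⁻¹ : kˣ) : k) • (1 : Matrix (Fin (2 * l)) (Fin (2 * l)) k)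
          * (((z : kˣ) : k) • (1 : Matrix (Fin (2 * l)) (Fin (2 * l)) k)) = 1 := by
        rw [smul_mul_smul_comm, one_mul]
        norm_cast
        simp
      rw [this]
  · intro hmem
    have h1 : phiHom k l (a, g) = 1 := congrArg Subtype.val hmem
    have hal : a ^ l = 1 := congrArg Prod.fst h1
    have hglu : sGLHom k (2 * l) a * Matrix.SpecialLinearGroup.toGL g = 1 :=
      congrArg Prod.snd h1
    have hgl : ((a : k) • (1 : Matrix (Fin (2 * l)) (Fin (2 * l)) k))
        * (g : Matrix (Fin (2 * l)) (Fin (2 * l)) k) = 1 := by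
      have := congrArg Units.val hglu
      rw [Units.val_mul] at this
      rw [← sGLHom_val]
      exact this
    have hginv : a⁻¹ ^ l = 1 := by rw [inv_pow, hal, inv_one]
    refine ⟨⟨a⁻¹, hginv⟩, ?_⟩
    apply Prod.ext
    · show (a⁻¹)⁻¹ = a
      rw [inv_inv]
    · show scalarSLHomHalf k l ⟨a⁻¹, hginv⟩ = g
      apply Subtype.ext
      show ((a⁻¹ : kˣ) : k) • (1 : Matrix (Fin (2 * l)) (Fin (2 * l)) k)
        = (g : Matrix (Fin (2 * l)) (Fin (2 * l)) k)
      rw [smul_one_mul] at hgl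
      have : (g : Matrix (Fin (2 * l)) (Fin (2 * l)) k)
          = ((a : k))⁻¹ • (1 : Matrix (Fin (2 * l)) (Fin (2 * l)) k) := by
        rw [← hgl, smul_smul, inv_mul_cancel₀ (Units.ne_zero a), one_smul]
      rw [this]
      norm_cast

theorem phiHom'_surjective (k : Type*) [Field k] [IsAlgClosed k] {l : ℕ} (hl : 1 ≤ l) :
    Function.Surjective (phiHom' k l) := by
  rintro ⟨⟨b, h⟩, hmem⟩
  have hdet : Matrix.det (h : Matrix (Fin (2 * l)) (Fin (2 * l)) k) = (b : k) ^ 2 := by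
    have := congrArg Units.val hmem
    exact this
  obtain ⟨c, hc⟩ := IsAlgClosed.exists_pow_nat_eq (k := k) (b : k) (Nat.lt_of_lt_of_le Nat.zero_lt_one hl)
  have hc0 : c ≠ 0 := by
    intro h0
    apply Units.ne_zero b
    rw [← hc, h0, zero_pow (by omega)]
  set a : kˣ := Units.mk0 c hc0 with ha
  have hdetg : Matrix.det ((c⁻¹ : k) • (h : Matrix (Fin (2 * l)) (Fin (2 * l)) k)) = 1 := by
    rw [Matrix.det_smul, hdet, Fintype.card_fin, ← hc]
    rw [inv_pow, mul_comm 2 l, pow_mul]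
    exact inv_mul_cancel₀ (pow_ne_zero _ (pow_ne_zero _ hc0))
  refine ⟨(a, ⟨(c⁻¹ : k) • (h : Matrix (Fin (2 * l)) (Fin (2 * l)) k), hdetg⟩), ?_⟩
  apply Subtype.ext
  apply Prod.ext
  · show a ^ l = b
    ext
    rw [Units.val_pow_eq_pow_val]
    exact hc
  · show sGLHom k (2 * l) a * Matrix.SpecialLinearGroup.toGL _ = h
    apply Units.ext
    show ((sGLHom k (2 * l) a : GL (Fin (2 * l)) k) : Matrix _ _ k)
      * ((c⁻¹ : k) • (h : Matrix (Fin (2 * l)) (Fin (2 * l)) k))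
      = (h : Matrix (Fin (2 * l)) (Fin (2 * l)) k)
    rw [sGLHom_val]
    have : ((a : k) • (1 : Matrix (Fin (2 * l)) (Fin (2 * l)) k))
        * ((c⁻¹ : k) • (h : Matrix (Fin (2 * l)) (Fin (2 * l)) k))
        = (h : Matrix (Fin (2 * l)) (Fin (2 * l)) k) := by
      rw [smul_mul_smul_comm, one_mul]
      show (c * c⁻¹) • _ = _
      rw [mul_inv_cancel₀ hc0, one_smul]
    rw [this]

/-- Over an algebraically closed field `k`, with `n = 2l`, the homomorphism
`(kˣ × SL_n(k))/N → H` induced by `(a, g) ↦ (aˡ, a·g)`, where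
`N = {(z⁻¹, z·I) : zˡ = 1}` and `H = {(b, h) : det h = b²}`, is a group isomorphism. -/
theorem quotient_units_SL_mulEquiv_detSq {k : Type*} [Field k] [IsAlgClosed k]
    {l : ℕ} (hl : 1 ≤ l) :
    haveI : (muDiagHomHalf k l).range.Normal := muDiagHomHalf_range_normal k l
    ∃ e : ((kˣ × Matrix.SpecialLinearGroup (Fin (2 * l)) k) ⧸ (muDiagHomHalf k l).range)
        ≃* detSqSubgroup k (2 * l),
      ∀ (a : kˣ) (g : Matrix.SpecialLinearGroup (Fin (2 * l)) k),
        ((e (QuotientGroup.mk (a, g)) : detSqSubgroup k (2 * l))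
            : kˣ × GL (Fin (2 * l)) k).1 = a ^ l ∧
        (((e (QuotientGroup.mk (a, g)) : detSqSubgroup k (2 * l))
            : kˣ × GL (Fin (2 * l)) k).2 : Matrix (Fin (2 * l)) (Fin (2 * l)) k)
          = (a : k) • (g : Matrix (Fin (2 * l)) (Fin (2 * l)) k) := by
  haveI : (muDiagHomHalf k l).range.Normal := muDiagHomHalf_range_normal k l
  refine ⟨(QuotientGroup.quotientMulEquivOfEq (muDiag_range_eq_ker k l)).trans
    (QuotientGroup.quotientKerEquivOfSurjective _ (phiHom'_surjective k hl)), ?_⟩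
  intro a g
  have he : ∀ x : kˣ × Matrix.SpecialLinearGroup (Fin (2 * l)) k,
      ((QuotientGroup.quotientMulEquivOfEq (muDiag_range_eq_ker k l)).trans
        (QuotientGroup.quotientKerEquivOfSurjective _ (phiHom'_surjective k hl)))
        (QuotientGroup.mk x) = phiHom' k l x := by
    intro x
    rfl
  rw [he (a, g)]
  constructor
  · rfl
  · show (((sGLHom k (2 * l) a : GL (Fin (2 * l)) k) : Matrix _ _ k)
      * (g : Matrix (Fin (2 * l)) (Fin (2 * l)) k))
      = (a : k) • (g : Matrix (Fin (2 * l)) (Fin (2 * l)) k)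
    rw [sGLHom_val, smul_one_mul]
end
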